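/- arXiv:2307.15096 — 2 statements merged into one kernel-verified Lean document; each statement's English description precedes it below -/
import Mathlib

section
/- For real q > 1 and all n ∈ ℕ, c(q) · q^{n(n+1)/2} / (q-1)^n ≤ [n]_q^! ≤ q^{n(n+1)/2} / (q-1)^n, where c(q) = ∏_{j=0}^∞ (1 - q^{-j-1}). -/
/-!
Factoring `q ^ (k + 1)` out of each `q ^ (k + 1) - 1` gives
`[n]_q^! = q ^ (n(n+1)/2) / (q - 1) ^ n * ∏_{k<n} (1 - q⁻¹ ^ (k + 1))`.
The factors lie in `[0, 1]`, so the partial products decrease from `1` towards `c(q)`.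
-/

/-- The `q`-factorial `[n]_q^! = ∏_{k=1}^n (q^k - 1)/(q - 1)` for real `q`. -/
noncomputable def qFact (q : ℝ) (n : ℕ) : ℝ :=
  ∏ k ∈ Finset.range n, (q ^ (k + 1) - 1) / (q - 1)

open Finset

theorem sum_range_id_add_one (n : ℕ) : ∑ k ∈ range n, (k + 1) = n * (n + 1) / 2 := by
  rw [← add_zero (∑ k ∈ range n, (k + 1)), ← sum_range_succ' (fun i => i), sum_range_id,
    Nat.add_sub_cancel, mul_comm]

theorem Real.multipliable_one_sub_pow_succ {x : ℝ} (hx : |x| < 1) :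
    Multipliable fun n : ℕ => 1 - x ^ (n + 1) := by
  simpa [sub_eq_add_neg] using Real.multipliable_one_add_of_summable
    ((summable_nat_add_iff 1).mpr (summable_geometric_of_abs_lt_one hx)).neg

theorem tprod_le_prod_range_of_le_one {f : ℕ → ℝ} (hf : Multipliable f)
    (h0 : ∀ n, 0 ≤ f n) (h1 : ∀ n, f n ≤ 1) (n : ℕ) : ∏' k, f k ≤ ∏ k ∈ range n, f k :=
  Antitone.le_of_tendsto
    (antitone_nat_of_succ_le fun m => by
      rw [prod_range_succ]
      exact mul_le_of_le_one_right (prod_nonneg fun k _ => h0 k) (h1 m))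
    hf.hasProd.tendsto_prod_nat n

theorem qFact_eq_pow_mul_prod_div {q : ℝ} (hq : q ≠ 0) (n : ℕ) :
    qFact q n = q ^ (n * (n + 1) / 2) * (∏ k ∈ range n, (1 - q⁻¹ ^ (k + 1))) / (q - 1) ^ n := by
  have hfactor : ∀ k : ℕ, q ^ (k + 1) - 1 = q ^ (k + 1) * (1 - q⁻¹ ^ (k + 1)) := fun k => by
    rw [mul_sub, inv_pow, mul_inv_cancel₀ (pow_ne_zero _ hq), mul_one]
  simp only [qFact, prod_div_distrib, prod_const, card_range, hfactor, prod_mul_distrib,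
    prod_pow_eq_pow_sum, sum_range_id_add_one]

/-- For real `q > 1` and all `n`,
`c(q) · q^{n(n+1)/2}/(q-1)^n ≤ [n]_q^! ≤ q^{n(n+1)/2}/(q-1)^n`,
where `c(q) = ∏_{j=1}^∞ (1 - q^{-j})`. -/
theorem stmt_9 (q : ℝ) (hq : 1 < q) (n : ℕ) :
    (∏' j : ℕ, (1 - (q⁻¹) ^ (j + 1))) * q ^ (n * (n + 1) / 2) / (q - 1) ^ n ≤
        qFact q n ∧
      qFact q n ≤ q ^ (n * (n + 1) / 2) / (q - 1) ^ n := by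
  have hq0 : 0 < q := zero_lt_one.trans hq
  have hx0 : 0 ≤ q⁻¹ := inv_nonneg.mpr hq0.le
  have hx1 : q⁻¹ < 1 := inv_lt_one_of_one_lt₀ hq
  have hfactor0 : ∀ k : ℕ, 0 ≤ 1 - q⁻¹ ^ (k + 1) := fun k =>
    sub_nonneg.mpr (pow_le_one₀ hx0 hx1.le)
  have hfactor1 : ∀ k : ℕ, 1 - q⁻¹ ^ (k + 1) ≤ 1 := fun k => sub_le_self _ (pow_nonneg hx0 _)
  have htprod := tprod_le_prod_range_of_le_one
    (Real.multipliable_one_sub_pow_succ (by rwa [abs_of_nonneg hx0])) hfactor0 hfactor1 n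
  have hprod := prod_le_one (fun k _ => hfactor0 k) (fun k _ => hfactor1 k) (s := range n)
  rw [qFact_eq_pow_mul_prod_div hq0.ne']
  constructor
  · rw [mul_comm (∏' _, _)]
    gcongr
  · gcongr
    exact mul_le_of_le_one_right (by positivity) hprod
end

section
/- Let |q| > 1. A double sequence (a_{n,m}) of complex numbers satisfies |a_{n,m}| ≤ C A^{n+m} |q|^{nm} for some C, A > 0 if and only if there are r, B, D > 0 such that for each n the series y_n(x₂) = Σ_m a_{n,m} x₂^m converges and is bounded on the disc of radius r/|q|^n, with sup_{|x₂| ≤ r/|q|^n} |y_n(x₂)| ≤ D B^n. -/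
/-!
With `Q = ‖q‖`: if `|a_{n,m}| ≤ C A^{n+m} Q^{nm}`, then on the disc of radius `(2A)⁻¹ / Q^n`
the terms of `y_n` are bounded by `C A^n 2^{-m}`, so `y_n` is dominated by a geometric series.
Conversely, absolute convergence on the closed disc of radius `ρ = r / Q^n` makes `y_n` continuous
up to its boundary, and Cauchy's estimate on that circle gives `|a_{n,m}| ρ^m ≤ D B^n`, i.e.
`|a_{n,m}| ≤ D B^n r^{-m} Q^{nm}`.
-/

open Metric FormalMultilinearSeries

section PowerSeries

variable {c : ℕ → ℂ} {ρ : ℝ}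

lemma hasFPowerSeriesAt_tsum_mul_pow (hρ : 0 < ρ) (hs : Summable fun m => ‖c m‖ * ρ ^ m) :
    HasFPowerSeriesAt (fun z => ∑' m, c m * z ^ m) (ofScalars ℂ c) 0 := by
  lift ρ to NNReal using hρ.le
  have hrad : (ρ : ENNReal) ≤ (ofScalars ℂ c).radius :=
    (ofScalars ℂ c).le_radius_of_summable_norm (by simpa only [ofScalars_norm] using hs)
  have hsum : (ofScalars ℂ c).sum = fun z => ∑' m, c m * z ^ m := ofScalarsSum_eq_tsum c
  rw [← hsum]
  exact ((ofScalars ℂ c).hasFPowerSeriesOnBall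
    ((ENNReal.coe_pos.2 hρ).trans_le hrad)).hasFPowerSeriesAt

lemma iteratedDeriv_tsum_mul_pow_zero (hρ : 0 < ρ) (hs : Summable fun m => ‖c m‖ * ρ ^ m)
    (m : ℕ) : iteratedDeriv m (fun z => ∑' m, c m * z ^ m) 0 = m.factorial * c m := by
  have hf := hasFPowerSeriesAt_tsum_mul_pow hρ hs
  have hc := congrFun ((ofScalars_series_eq_iff ℂ _ _).1
    (hf.analyticAt.hasFPowerSeriesAt.eq_formalMultilinearSeries hf)) m
  rw [div_eq_iff (by exact_mod_cast m.factorial_ne_zero)] at hc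
  rw [hc, mul_comm]

lemma diffContOnCl_tsum_mul_pow (hs : Summable fun m => ‖c m‖ * ρ ^ m) :
    DiffContOnCl ℂ (fun z => ∑' m, c m * z ^ m) (ball 0 ρ) := by
  have hle : ∀ m, ∀ z ∈ closedBall (0 : ℂ) ρ, ‖c m * z ^ m‖ ≤ ‖c m‖ * ρ ^ m := by
    intro m z hz
    rw [norm_mul, norm_pow]
    gcongr
    simpa using hz
  refine ⟨Complex.differentiableOn_tsum_of_summable_norm hs (fun m => by fun_prop) isOpen_ball
    fun m z hz => hle m z (ball_subset_closedBall hz), ?_⟩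
  exact (continuousOn_tsum (fun m => by fun_prop) hs hle).mono closure_ball_subset_closedBall

lemma norm_mul_pow_le_of_norm_tsum_le {M : ℝ} (hρ : 0 < ρ)
    (hs : Summable fun m => ‖c m‖ * ρ ^ m)
    (hM : ∀ z ∈ sphere (0 : ℂ) ρ, ‖∑' m, c m * z ^ m‖ ≤ M) (m : ℕ) :
    ‖c m‖ * ρ ^ m ≤ M := by
  have h := Complex.norm_iteratedDeriv_le_of_forall_mem_sphere_norm_le m hρ
    (diffContOnCl_tsum_mul_pow hs) hM
  rw [iteratedDeriv_tsum_mul_pow_zero hρ hs, norm_mul, Complex.norm_natCast,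
    mul_div_assoc, mul_le_mul_iff_right₀ (by exact_mod_cast m.factorial_pos),
    le_div_iff₀ (by positivity)] at h
  exact h

end PowerSeries

lemma summable_and_norm_tsum_le_of_norm_le_geometric {E : Type*} [NormedAddCommGroup E]
    [CompleteSpace E] {f : ℕ → E} {K t : ℝ} (ht₀ : 0 ≤ t) (ht₁ : t < 1)
    (hf : ∀ m, ‖f m‖ ≤ K * t ^ m) :
    Summable f ∧ ‖∑' m, f m‖ ≤ K * (1 - t)⁻¹ := by
  have hg := (hasSum_geometric_of_lt_one ht₀ ht₁).mul_left K
  exact ⟨.of_norm_bounded hg.summable hf, tsum_of_norm_bounded hg hf⟩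

section DoubleSequence

variable {a : ℕ → ℕ → ℂ} {Q : ℝ}

lemma exists_disc_bound_of_coeff_bound (hQ : 0 < Q)
    (h : ∃ C A : ℝ, 0 < C ∧ 0 < A ∧ ∀ n m : ℕ, ‖a n m‖ ≤ C * A ^ (n + m) * Q ^ (n * m)) :
    ∃ r B D : ℝ, 0 < r ∧ 0 < B ∧ 0 < D ∧ ∀ n : ℕ, ∀ z : ℂ, ‖z‖ ≤ r / Q ^ n →
      Summable (fun m : ℕ => a n m * z ^ m) ∧ ‖∑' m : ℕ, a n m * z ^ m‖ ≤ D * B ^ n := by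
  obtain ⟨C, A, hC, hA, ha⟩ := h
  refine ⟨(2 * A)⁻¹, A, 2 * C, by positivity, hA, by positivity, fun n z hz => ?_⟩
  have hterm : ∀ m, ‖a n m * z ^ m‖ ≤ C * A ^ n * 2⁻¹ ^ m := fun m => calc
    ‖a n m * z ^ m‖ = ‖a n m‖ * ‖z‖ ^ m := by rw [norm_mul, norm_pow]
    _ ≤ C * A ^ (n + m) * Q ^ (n * m) * ((2 * A)⁻¹ / Q ^ n) ^ m := by gcongr; exact ha n m
    _ = C * A ^ n * 2⁻¹ ^ m := by
      rw [div_pow, ← pow_mul, mul_inv, mul_pow, pow_add, inv_pow, inv_pow]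
      field_simp
  have := summable_and_norm_tsum_le_of_norm_le_geometric (by norm_num) (by norm_num) hterm
  refine ⟨this.1, this.2.trans_eq ?_⟩
  norm_num
  ring

lemma exists_coeff_bound_of_disc_bound (hQ : 0 < Q)
    (h : ∃ r B D : ℝ, 0 < r ∧ 0 < B ∧ 0 < D ∧ ∀ n : ℕ, ∀ z : ℂ, ‖z‖ ≤ r / Q ^ n →
      Summable (fun m : ℕ => a n m * z ^ m) ∧ ‖∑' m : ℕ, a n m * z ^ m‖ ≤ D * B ^ n) :
    ∃ C A : ℝ, 0 < C ∧ 0 < A ∧ ∀ n m : ℕ, ‖a n m‖ ≤ C * A ^ (n + m) * Q ^ (n * m) := by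
  obtain ⟨r, B, D, hr, hB, hD, h⟩ := h
  refine ⟨D, max B r⁻¹, hD, lt_max_of_lt_left hB, fun n m => ?_⟩
  have hρ : 0 < r / Q ^ n := by positivity
  have hs : Summable fun m => ‖a n m‖ * (r / Q ^ n) ^ m := by
    have hnorm : ‖((r / Q ^ n : ℝ) : ℂ)‖ = r / Q ^ n := by
      rw [Complex.norm_real, Real.norm_of_nonneg hρ.le]
    simpa only [norm_mul, norm_pow, hnorm] using (h n _ hnorm.le).1.norm
  have hcauchy := norm_mul_pow_le_of_norm_tsum_le hρ hs
    (fun z hz => (h n z (mem_sphere_zero_iff_norm.1 hz).le).2) m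
  rw [div_pow, ← pow_mul, mul_div_assoc', div_le_iff₀ (by positivity),
    ← le_div_iff₀ (by positivity)] at hcauchy
  calc ‖a n m‖ ≤ D * B ^ n * Q ^ (n * m) / r ^ m := hcauchy
    _ = D * B ^ n * r⁻¹ ^ m * Q ^ (n * m) := by rw [inv_pow]; ring
    _ ≤ D * max B r⁻¹ ^ n * max B r⁻¹ ^ m * Q ^ (n * m) := by gcongr <;> simp
    _ = D * max B r⁻¹ ^ (n + m) * Q ^ (n * m) := by ring

end DoubleSequence

/-- Characterization of the space `𝒪₀^q`: a double sequence satisfies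
`|a_{n,m}| ≤ C A^{n+m} |q|^{nm}` iff for some `r, B, D > 0` each series
`y_n(x₂) = Σ_m a_{n,m} x₂^m` converges on the closed disc of radius `r/|q|^n`
with `|y_n(x₂)| ≤ D B^n` there. -/
theorem stmt_12 (q : ℂ) (hq : 1 < ‖q‖) (a : ℕ → ℕ → ℂ) :
    (∃ C A : ℝ, 0 < C ∧ 0 < A ∧ ∀ n m : ℕ,
        ‖a n m‖ ≤ C * A ^ (n + m) * (‖q‖) ^ (n * m)) ↔
      (∃ r B D : ℝ, 0 < r ∧ 0 < B ∧ 0 < D ∧ ∀ n : ℕ, ∀ x₂ : ℂ,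
        ‖x₂‖ ≤ r / (‖q‖) ^ n →
          Summable (fun m : ℕ => a n m * x₂ ^ m) ∧
            ‖∑' m : ℕ, a n m * x₂ ^ m‖ ≤ D * B ^ n) := by
  have hq₀ : 0 < ‖q‖ := one_pos.trans hq
  exact ⟨exists_disc_bound_of_coeff_bound hq₀, exists_coeff_bound_of_disc_bound hq₀⟩
end
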